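/- arXiv:2603.18948 — 6 statements merged into one kernel-verified Lean document; each statement's English description precedes it below -/
import Mathlib

section
/- For increasing families A, B ⊆ 2^[n], the disjoint occurrence satisfies |A □ B| ≤ |{ [n]\A : A ∈ A } ∩ B|, i.e., the number of sets expressible as a disjoint union of a member of A and a member of B is at most the number of members of B whose complement lies in A. -/
open Finset
open scoped Classical

noncomputable section

/-- `F` contains `s` pairwise disjoint sets (a matching of size `s`). -/
def HasMatching {n : ℕ} (s : ℕ) (F : Finset (Finset (Fin n))) : Prop :=
  ∃ A : Fin s → Finset (Fin n), (∀ i, A i ∈ F) ∧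
    ∀ i j : Fin s, i ≠ j → Disjoint (A i) (A j)

/-- `F` is `s`-saturated: it has no matching of size `s`, and adding any set
not in `F` creates one. -/
def Saturated {n : ℕ} (s : ℕ) (F : Finset (Finset (Fin n))) : Prop :=
  ¬ HasMatching s F ∧ ∀ A : Finset (Fin n), A ∉ F → HasMatching s (insert A F)

/-- Disjoint occurrence of two families. -/
def box {n : ℕ} (𝒜 ℬ : Finset (Finset (Fin n))) : Finset (Finset (Fin n)) :=
  Finset.univ.filter fun S => ∃ a ∈ 𝒜, ∃ b ∈ ℬ, Disjoint a b ∧ S = a ∪ b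

/-- `boxPow U F m` is `F^{□m}` over ground set `U`: the family of unions of `m`
pairwise disjoint members of `F`, with `F^{□0} := 2^U`. -/
def boxPow {n : ℕ} (U : Finset (Fin n)) (F : Finset (Finset (Fin n))) :
    ℕ → Finset (Finset (Fin n))
  | 0 => U.powerset
  | (m+1) => U.powerset.filter fun S => ∃ A : Fin (m+1) → Finset (Fin n),
      (∀ i, A i ∈ F) ∧ (∀ i j : Fin (m+1), i ≠ j → Disjoint (A i) (A j)) ∧
      S = Finset.univ.sup A

/-- A family is increasing if it is closed under supersets. -/
def Increasing {n : ℕ} (F : Finset (Finset (Fin n))) : Prop :=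
  ∀ a ∈ F, ∀ b : Finset (Fin n), a ⊆ b → b ∈ F

/-- `S` is a disjoint union of (possibly zero) members of `F`. -/
def IsDisjUnionOf {n : ℕ} (F : Finset (Finset (Fin n))) (S : Finset (Fin n)) : Prop :=
  ∃ (m : ℕ) (A : Fin m → Finset (Fin n)), (∀ i, A i ∈ F) ∧
    (∀ i j : Fin m, i ≠ j → Disjoint (A i) (A j)) ∧ S = Finset.univ.sup A

def boxF {n : ℕ} (U : Finset (Fin n)) (𝒜 ℬ : Finset (Finset (Fin n))) :
    Finset (Finset (Fin n)) :=
  U.powerset.filter fun S => ∃ a ∈ 𝒜, ∃ b ∈ ℬ, Disjoint a b ∧ S = a ∪ b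

lemma boxF_mono {n : ℕ} {U : Finset (Fin n)} {A A' B B' : Finset (Finset (Fin n))}
    (hA : A ⊆ A') (hB : B ⊆ B') : boxF U A B ⊆ boxF U A' B' := by
  intro S hS
  simp only [boxF, mem_filter, mem_powerset] at hS ⊢
  obtain ⟨hSU, a, ha, b, hb, hd, rfl⟩ := hS
  exact ⟨hSU, a, hA ha, b, hB hb, hd, rfl⟩

lemma key {n : ℕ} (U : Finset (Fin n)) :
    ∀ A B : Finset (Finset (Fin n)),
      (∀ a ∈ A, a ⊆ U) → (∀ b ∈ B, b ⊆ U) →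
      (∀ a ∈ A, ∀ c, a ⊆ c → c ⊆ U → c ∈ A) →
      (∀ b ∈ B, ∀ c, b ⊆ c → c ⊆ U → c ∈ B) →
      (boxF U A B).card ≤ (B.filter fun C => U \ C ∈ A).card := by
  induction U using Finset.induction_on with
  | empty =>
      intro A B hAU hBU hA hB
      rcases (boxF ∅ A B).eq_empty_or_nonempty with h | h
      · simp [h]
      · obtain ⟨S, hS⟩ := h
        simp only [boxF, mem_filter, mem_powerset, Finset.subset_empty] at hS
        obtain ⟨rfl, a, ha, b, hb, hd, hab⟩ := hS
        have ha0 : a = ∅ := by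
          have := Finset.union_eq_empty.mp hab.symm; exact this.1
        have hb0 : b = ∅ := by
          have := Finset.union_eq_empty.mp hab.symm; exact this.2
        subst ha0; subst hb0
        have h1 : (boxF ∅ A B).card ≤ 1 := by
          have : boxF ∅ A B ⊆ (∅ : Finset (Fin n)).powerset := filter_subset _ _
          calc (boxF ∅ A B).card ≤ ((∅ : Finset (Fin n)).powerset).card :=
                card_le_card this
            _ = 1 := by simp
        have h2 : (∅ : Finset (Fin n)) ∈ B.filter fun C => (∅ : Finset (Fin n)) \ C ∈ A := by
          simp only [mem_filter]
          exact ⟨hb, by simpa using ha⟩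
        have := Finset.card_pos.mpr ⟨_, h2⟩
        omega
  | @insert x V hx ih =>
      intro A B hAU hBU hA hB
      set A0 : Finset (Finset (Fin n)) := A.filter fun a => x ∉ a with hA0def
      set A1 : Finset (Finset (Fin n)) := V.powerset.filter fun a => insert x a ∈ A with hA1def
      set B0 : Finset (Finset (Fin n)) := B.filter fun b => x ∉ b with hB0def
      set B1 : Finset (Finset (Fin n)) := V.powerset.filter fun b => insert x b ∈ B with hB1def
      -- basic membership facts
      have memA0 : ∀ a, a ∈ A0 ↔ a ∈ A ∧ x ∉ a := by intro a; simp [hA0def]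
      have memA1 : ∀ a, a ∈ A1 ↔ a ⊆ V ∧ insert x a ∈ A := by
        intro a; simp [hA1def]
      have memB0 : ∀ b, b ∈ B0 ↔ b ∈ B ∧ x ∉ b := by intro b; simp [hB0def]
      have memB1 : ∀ b, b ∈ B1 ↔ b ⊆ V ∧ insert x b ∈ B := by
        intro b; simp [hB1def]
      have subV : ∀ {s : Finset (Fin n)}, s ⊆ insert x V → x ∉ s → s ⊆ V := by
        intro s hs hxs y hy
        rcases Finset.mem_insert.mp (hs hy) with h | h
        · exact absurd (h ▸ hy) hxs
        · exact h
      have hA0U : ∀ a ∈ A0, a ⊆ V := by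
        intro a ha; rw [memA0] at ha; exact subV (hAU a ha.1) ha.2
      have hA1U : ∀ a ∈ A1, a ⊆ V := fun a ha => ((memA1 a).mp ha).1
      have hB0U : ∀ b ∈ B0, b ⊆ V := by
        intro b hb; rw [memB0] at hb; exact subV (hBU b hb.1) hb.2
      have hB1U : ∀ b ∈ B1, b ⊆ V := fun b hb => ((memB1 b).mp hb).1
      have hA0inc : ∀ a ∈ A0, ∀ c, a ⊆ c → c ⊆ V → c ∈ A0 := by
        intro a ha c hac hcV
        rw [memA0] at ha ⊢
        exact ⟨hA a ha.1 c hac (hcV.trans (subset_insert x V)), fun hxc => hx (hcV hxc)⟩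
      have hA1inc : ∀ a ∈ A1, ∀ c, a ⊆ c → c ⊆ V → c ∈ A1 := by
        intro a ha c hac hcV
        rw [memA1] at ha ⊢
        refine ⟨hcV, hA _ ha.2 _ (insert_subset_insert x hac) ?_⟩
        exact insert_subset_insert x hcV
      have hB0inc : ∀ b ∈ B0, ∀ c, b ⊆ c → c ⊆ V → c ∈ B0 := by
        intro b hb c hbc hcV
        rw [memB0] at hb ⊢
        exact ⟨hB b hb.1 c hbc (hcV.trans (subset_insert x V)), fun hxc => hx (hcV hxc)⟩
      have hB1inc : ∀ b ∈ B1, ∀ c, b ⊆ c → c ⊆ V → c ∈ B1 := by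
        intro b hb c hbc hcV
        rw [memB1] at hb ⊢
        refine ⟨hcV, hB _ hb.2 _ (insert_subset_insert x hbc) ?_⟩
        exact insert_subset_insert x hcV
      have hA01 : A0 ⊆ A1 := by
        intro a ha
        rw [memA0] at ha; rw [memA1]
        refine ⟨hA0U a (by rw [memA0]; exact ha), ?_⟩
        exact hA a ha.1 _ (subset_insert x a)
          (insert_subset_insert x (subV (hAU a ha.1) ha.2))
      have hB01 : B0 ⊆ B1 := by
        intro b hb
        rw [memB0] at hb; rw [memB1]
        refine ⟨hB0U b (by rw [memB0]; exact hb), ?_⟩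
        exact hB b hb.1 _ (subset_insert x b)
          (insert_subset_insert x (subV (hBU b hb.1) hb.2))
      -- injectivity of insert x on subsets of V
      have hinj : ∀ {s t : Finset (Fin n)}, s ⊆ V → t ⊆ V →
          insert x s = insert x t → s = t := by
        intro s t hs ht hst
        have hxs : x ∉ s := fun h => hx (hs h)
        have hxt : x ∉ t := fun h => hx (ht h)
        rw [← Finset.erase_insert hxs, ← Finset.erase_insert hxt, hst]
      -- e1
      have e1 : (boxF (insert x V) A B).filter (fun S => x ∉ S) = boxF V A0 B0 := by
        ext S
        simp only [mem_filter, boxF, mem_powerset]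
        constructor
        · rintro ⟨⟨hSU, a, ha, b, hb, hd, rfl⟩, hxS⟩
          have hxa : x ∉ a := fun h => hxS (mem_union_left _ h)
          have hxb : x ∉ b := fun h => hxS (mem_union_right _ h)
          exact ⟨subV hSU hxS, a, (memA0 a).mpr ⟨ha, hxa⟩, b, (memB0 b).mpr ⟨hb, hxb⟩, hd, rfl⟩
        · rintro ⟨hSV, a, ha, b, hb, hd, rfl⟩
          rw [memA0] at ha; rw [memB0] at hb
          exact ⟨⟨(hSV.trans (subset_insert x V)), a, ha.1, b, hb.1, hd, rfl⟩,
            by simp [ha.2, hb.2]⟩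
      -- e2
      have e2 : (boxF (insert x V) A B).filter (fun S => x ∈ S) =
          ((boxF V A1 B0) ∪ (boxF V A0 B1)).image (insert x) := by
        ext S
        simp only [mem_filter, mem_image, mem_union, boxF, mem_powerset]
        constructor
        · rintro ⟨⟨hSU, a, ha, b, hb, hd, rfl⟩, hxS⟩
          rcases Finset.mem_union.mp hxS with hxa | hxb
          · have hxb : x ∉ b := fun h => (Finset.disjoint_left.mp hd hxa) h
            refine ⟨(a.erase x) ∪ b, Or.inl ⟨?_, a.erase x, ?_, b, (memB0 b).mpr ⟨hb, hxb⟩,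
              hd.mono_left (erase_subset x a), rfl⟩, ?_⟩
            · refine union_subset ?_ (subV (hBU b hb) hxb)
              intro y hy
              rcases Finset.mem_insert.mp (hAU a ha (Finset.mem_of_mem_erase hy)) with h | h
              · exact absurd h (Finset.ne_of_mem_erase hy)
              · exact h
            · rw [memA1]
              constructor
              · intro y hy
                rcases Finset.mem_insert.mp (hAU a ha (Finset.mem_of_mem_erase hy)) with h | h
                · exact absurd h (Finset.ne_of_mem_erase hy)
                · exact h
              · rwa [Finset.insert_erase hxa]
            · rw [← Finset.insert_union, Finset.insert_erase hxa]
          · have hxa : x ∉ a := fun h => (Finset.disjoint_left.mp hd h) hxb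
            refine ⟨a ∪ (b.erase x), Or.inr ⟨?_, a, (memA0 a).mpr ⟨ha, hxa⟩, b.erase x, ?_,
              hd.mono_right (erase_subset x b), rfl⟩, ?_⟩
            · refine union_subset (subV (hAU a ha) hxa) ?_
              intro y hy
              rcases Finset.mem_insert.mp (hBU b hb (Finset.mem_of_mem_erase hy)) with h | h
              · exact absurd h (Finset.ne_of_mem_erase hy)
              · exact h
            · rw [memB1]
              constructor
              · intro y hy
                rcases Finset.mem_insert.mp (hBU b hb (Finset.mem_of_mem_erase hy)) with h | h
                · exact absurd h (Finset.ne_of_mem_erase hy)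
                · exact h
              · rwa [Finset.insert_erase hxb]
            · rw [← Finset.union_insert, Finset.insert_erase hxb]
        · rintro ⟨T, hT, rfl⟩
          rcases hT with ⟨hTV, a, ha, b, hb, hd, rfl⟩ | ⟨hTV, a, ha, b, hb, hd, rfl⟩
          · rw [memA1] at ha; rw [memB0] at hb
            have hxb : x ∉ b := hb.2
            refine ⟨⟨insert_subset_insert x hTV, insert x a, ha.2, b, hb.1, ?_, ?_⟩, mem_insert_self x _⟩
            · rw [Finset.disjoint_left]
              intro y hy
              rcases Finset.mem_insert.mp hy with rfl | hy
              · exact hxb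
              · exact Finset.disjoint_left.mp hd hy
            · rw [Finset.insert_union]
          · rw [memA0] at ha; rw [memB1] at hb
            have hxa : x ∉ a := ha.2
            refine ⟨⟨insert_subset_insert x hTV, a, ha.1, insert x b, hb.2, ?_, ?_⟩, mem_insert_self x _⟩
            · rw [Finset.disjoint_right]
              intro y hy
              rcases Finset.mem_insert.mp hy with rfl | hy
              · exact hxa
              · exact Finset.disjoint_right.mp hd hy
            · rw [Finset.union_insert]
      -- e3
      have sdiff1 : ∀ {C : Finset (Fin n)}, x ∉ C → insert x V \ C = insert x (V \ C) := by
        intro C hxC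
        ext y
        simp only [Finset.mem_sdiff, Finset.mem_insert]
        constructor
        · rintro ⟨h1 | h1, h2⟩
          · exact Or.inl h1
          · exact Or.inr ⟨h1, h2⟩
        · rintro (rfl | ⟨h1, h2⟩)
          · exact ⟨Or.inl rfl, hxC⟩
          · exact ⟨Or.inr h1, h2⟩
      have e3 : (B.filter fun C => insert x V \ C ∈ A).filter (fun C => x ∉ C) =
          B0.filter fun C => V \ C ∈ A1 := by
        ext C
        simp only [mem_filter]
        constructor
        · rintro ⟨⟨hCB, hCA⟩, hxC⟩
          refine ⟨(memB0 C).mpr ⟨hCB, hxC⟩, (memA1 _).mpr ⟨sdiff_subset, ?_⟩⟩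
          rwa [← sdiff1 hxC]
        · rintro ⟨hCB0, hCA1⟩
          rw [memB0] at hCB0; rw [memA1] at hCA1
          exact ⟨⟨hCB0.1, by rw [sdiff1 hCB0.2]; exact hCA1.2⟩, hCB0.2⟩
      -- e4
      have sdiff2 : ∀ {D : Finset (Fin n)}, D ⊆ V → insert x V \ insert x D = V \ D := by
        intro D hD
        ext y
        simp only [Finset.mem_sdiff, Finset.mem_insert, not_or]
        constructor
        · rintro ⟨h1 | h1, h2, h3⟩
          · exact absurd h1 h2
          · exact ⟨h1, h3⟩
        · rintro ⟨h1, h2⟩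
          have : y ≠ x := fun h => hx (h ▸ h1)
          exact ⟨Or.inr h1, this, h2⟩
      have e4 : (B.filter fun C => insert x V \ C ∈ A).filter (fun C => x ∈ C) =
          (B1.filter fun D => V \ D ∈ A0).image (insert x) := by
        ext C
        simp only [mem_filter, mem_image]
        constructor
        · rintro ⟨⟨hCB, hCA⟩, hxC⟩
          have hCU : C ⊆ insert x V := hBU C hCB
          have hDV : C.erase x ⊆ V := by
            intro y hy
            rcases Finset.mem_insert.mp (hCU (Finset.mem_of_mem_erase hy)) with h | h
            · exact absurd h (Finset.ne_of_mem_erase hy)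
            · exact h
          refine ⟨C.erase x, ⟨(memB1 _).mpr ⟨hDV, by rwa [Finset.insert_erase hxC]⟩, ?_⟩,
            Finset.insert_erase hxC⟩
          rw [memA0]
          have heq : V \ C.erase x = insert x V \ C := by
            rw [← Finset.insert_erase hxC, sdiff2 hDV, Finset.insert_erase hxC]
          exact ⟨heq ▸ hCA, fun h => hx (Finset.mem_sdiff.mp h).1⟩
        · rintro ⟨D, ⟨hDB1, hDA0⟩, rfl⟩
          rw [memB1] at hDB1; rw [memA0] at hDA0
          refine ⟨⟨hDB1.2, ?_⟩, mem_insert_self x D⟩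
          rw [sdiff2 hDB1.1]
          exact hDA0.1
      -- cardinalities
      have cLHS : (boxF (insert x V) A B).card =
          (boxF V A0 B0).card + ((boxF V A1 B0) ∪ (boxF V A0 B1)).card := by
        rw [← Finset.card_filter_add_card_filter_not
          (s := boxF (insert x V) A B) (p := fun S => x ∈ S)]
        rw [e2]
        have : (boxF (insert x V) A B).filter (fun S => ¬ x ∈ S) = boxF V A0 B0 := e1
        rw [this]
        rw [Finset.card_image_of_injOn]
        · omega
        · intro s hs t ht hst
          simp only [boxF, mem_union, mem_filter, mem_powerset, Finset.mem_coe] at hs ht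
          have hsV : s ⊆ V := by rcases hs with h | h <;> exact h.1
          have htV : t ⊆ V := by rcases ht with h | h <;> exact h.1
          exact hinj hsV htV hst
      have cRHS : (B.filter fun C => insert x V \ C ∈ A).card =
          (B0.filter fun C => V \ C ∈ A1).card + (B1.filter fun D => V \ D ∈ A0).card := by
        rw [← Finset.card_filter_add_card_filter_not
          (s := B.filter fun C => insert x V \ C ∈ A) (p := fun C => x ∈ C)]
        rw [e4]
        have : ((B.filter fun C => insert x V \ C ∈ A).filter fun C => ¬ x ∈ C) =
            B0.filter fun C => V \ C ∈ A1 := e3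
        rw [this]
        rw [Finset.card_image_of_injOn]
        · omega
        · intro s hs t ht hst
          simp only [mem_filter, Finset.mem_coe] at hs ht
          exact hinj (hB1U _ hs.1) (hB1U _ ht.1) hst
      have hZ : boxF V A0 B0 ⊆ (boxF V A1 B0) ∩ (boxF V A0 B1) :=
        Finset.subset_inter (boxF_mono hA01 (Finset.Subset.refl _))
          (boxF_mono (Finset.Subset.refl _) hB01)
      have hZc := Finset.card_le_card hZ
      have hui := Finset.card_union_add_card_inter (boxF V A1 B0) (boxF V A0 B1)
      have ih1 := ih A1 B0 hA1U hB0U hA1inc hB0inc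
      have ih2 := ih A0 B1 hA0U hB1U hA0inc hB1inc
      omega

/-- for increasing families, `|𝒜 □ ℬ| ≤ |𝒜̄ ∩ ℬ|`. -/
theorem box_card_le {n : ℕ} (𝒜 ℬ : Finset (Finset (Fin n)))
    (h𝒜 : Increasing 𝒜) (hℬ : Increasing ℬ) :
    (box 𝒜 ℬ).card ≤ ((𝒜.image fun A => Aᶜ) ∩ ℬ).card := by
  have h1 : box 𝒜 ℬ = boxF Finset.univ 𝒜 ℬ := by
    rw [_root_.box, boxF, Finset.powerset_univ]
  have h2 : (𝒜.image fun A => Aᶜ) ∩ ℬ = ℬ.filter fun C => Finset.univ \ C ∈ 𝒜 := by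
    ext C
    simp only [mem_inter, mem_image, mem_filter]
    constructor
    · rintro ⟨⟨a, ha, rfl⟩, hC⟩
      refine ⟨hC, ?_⟩
      rwa [← Finset.compl_eq_univ_sdiff, compl_compl]
    · rintro ⟨hC, hA⟩
      refine ⟨⟨Finset.univ \ C, hA, ?_⟩, hC⟩
      rw [← Finset.compl_eq_univ_sdiff, compl_compl]
  rw [h1, h2]
  exact key Finset.univ 𝒜 ℬ (fun a _ => subset_univ a) (fun b _ => subset_univ b)
    (fun a ha c hac _ => h𝒜 a ha c hac) (fun b hb c hbc _ => hℬ b hb c hbc)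
end
end

section
/- Let F ⊆ 2^[n] be s-saturated, fix x ∈ [n], and define F(x) := { F\{x} : F ∈ F, x ∈ F } and F(x̄) := { F ∈ F : x ∉ F } as families in 2^([n]\{x}). Then for every integer t with 0 ≤ t ≤ s−1, the complement-of-complement family of F(x) □ F(x̄)^{□t} (within the ground set [n]\{x}) contains F(x̄)^{□(s−1−t)}; equivalently, for any s−1−t pairwise disjoint sets A_1,...,A_{s−1−t} ∈ F(x̄) with union B, the set ([n]\{x})\B does not belong to F(x) □ F(x̄)^{□t}. -/
open Finset
open scoped Classical

noncomputable section

lemma boxPow_spec {n : ℕ} (U : Finset (Fin n)) (F : Finset (Finset (Fin n))) (t : ℕ)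
    (b : Finset (Fin n)) (hb : b ∈ boxPow U F t) :
    ∃ C : Fin t → Finset (Fin n), (∀ i, C i ∈ F) ∧
      (∀ i j, i ≠ j → Disjoint (C i) (C j)) ∧ (∀ i, C i ⊆ b) := by
  cases t with
  | zero => exact ⟨Fin.elim0, fun i => i.elim0, fun i => i.elim0, fun i => i.elim0⟩
  | succ m =>
    simp only [boxPow, mem_filter] at hb
    obtain ⟨-, C, h1, h2, h3⟩ := hb
    exact ⟨C, h1, h2, fun i => h3 ▸ Finset.le_sup (mem_univ i)⟩

lemma append_pairwise_disjoint {n m p : ℕ} (A : Fin m → Finset (Fin n))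
    (B : Fin p → Finset (Fin n))
    (hA : ∀ i j, i ≠ j → Disjoint (A i) (A j))
    (hB : ∀ i j, i ≠ j → Disjoint (B i) (B j))
    (hAB : ∀ i j, Disjoint (A i) (B j)) :
    ∀ i j : Fin (m + p), i ≠ j → Disjoint (Fin.append A B i) (Fin.append A B j) := by
  intro i
  refine Fin.addCases (motive := fun i => ∀ j : Fin (m + p), i ≠ j →
    Disjoint (Fin.append A B i) (Fin.append A B j)) ?_ ?_ i
  · intro il j
    refine Fin.addCases (motive := fun j => Fin.castAdd p il ≠ j →
      Disjoint (Fin.append A B (Fin.castAdd p il)) (Fin.append A B j)) ?_ ?_ j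
    · intro jl hne
      simp only [Fin.append_left]
      exact hA il jl (fun h => hne (by rw [h]))
    · intro jr _
      simp only [Fin.append_left, Fin.append_right]
      exact hAB il jr
  · intro ir j
    refine Fin.addCases (motive := fun j => Fin.natAdd m ir ≠ j →
      Disjoint (Fin.append A B (Fin.natAdd m ir)) (Fin.append A B j)) ?_ ?_ j
    · intro jl _
      simp only [Fin.append_left, Fin.append_right]
      exact (hAB jl ir).symm
    · intro jr hne
      simp only [Fin.append_right]
      exact hB ir jr (fun h => hne (by rw [h]))

/-- for an `s`-saturated `F`, `x ∈ [n]`, and `0 ≤ t ≤ s-1`,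
for any `s-1-t` pairwise disjoint members of `F(x̄)` with union `B`, the set
`([n] \ {x}) \ B` does not belong to `F(x) □ F(x̄)^{□t}`. -/
theorem boxPow_section_not_mem {n s : ℕ} (hn : 1 ≤ n) (hs : 2 ≤ s)
    (F : Finset (Finset (Fin n))) (hF : Saturated s F) (x : Fin n)
    (t : ℕ) (ht : t ≤ s - 1)
    (A : Fin (s - 1 - t) → Finset (Fin n))
    (hA : ∀ i, A i ∈ F.filter fun S => x ∉ S)
    (hd : ∀ i j, i ≠ j → Disjoint (A i) (A j)) :
    (({x} : Finset (Fin n))ᶜ \ Finset.univ.sup A) ∉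
      box ((F.filter fun S => x ∈ S).image fun S => S.erase x)
        (boxPow (({x} : Finset (Fin n))ᶜ) (F.filter fun S => x ∉ S) t) := by
  intro hmem
  set B : Finset (Fin n) := Finset.univ.sup A with hB
  unfold _root_.box at hmem
  rw [mem_filter] at hmem
  obtain ⟨-, a, ha, b, hb, hab, heq⟩ := hmem
  rw [mem_image] at ha
  obtain ⟨S, hSmem, rfl⟩ := ha
  rw [mem_filter] at hSmem
  obtain ⟨hSF, hxS⟩ := hSmem
  obtain ⟨C, hCmem, hCd, hCb⟩ := boxPow_spec _ _ _ _ hb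
  -- basic subset facts
  have haB : Disjoint (S.erase x) B := by
    have : S.erase x ⊆ ({x} : Finset (Fin n))ᶜ \ B := heq ▸ subset_union_left
    exact sdiff_disjoint.mono_left this
  have hbB : Disjoint b B := by
    have : b ⊆ ({x} : Finset (Fin n))ᶜ \ B := heq ▸ subset_union_right
    exact sdiff_disjoint.mono_left this
  have hxb : x ∉ b := by
    have : b ⊆ ({x} : Finset (Fin n))ᶜ \ B := heq ▸ subset_union_right
    intro hx
    have := this hx
    simp at this
  -- S disjoint from each A i
  have hSA : ∀ i, Disjoint S (A i) := by
    intro i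
    have hxAi : x ∉ A i := (mem_filter.mp (hA i)).2
    have hAiB : A i ⊆ B := Finset.le_sup (mem_univ i)
    rw [← Finset.insert_erase hxS, Finset.insert_eq, disjoint_union_left]
    exact ⟨by simpa using hxAi, (haB.mono_right hAiB)⟩
  have hSC : ∀ j, Disjoint S (C j) := by
    intro j
    have hxCj : x ∉ C j := (mem_filter.mp (hCmem j)).2
    rw [← Finset.insert_erase hxS, Finset.insert_eq, disjoint_union_left]
    exact ⟨by simpa using hxCj, hab.mono_right (hCb j)⟩
  have hAC : ∀ i j, Disjoint (A i) (C j) := by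
    intro i j
    have hAiB : A i ⊆ B := Finset.le_sup (mem_univ i)
    exact ((hbB.mono_left (hCb j)).mono_right hAiB).symm
  -- extract the pure F-membership
  have hAF : ∀ i, A i ∈ F := fun i => (mem_filter.mp (hA i)).1
  have hCF : ∀ j, C j ∈ F := fun j => (mem_filter.mp (hCmem j)).1
  -- build a matching of size s
  set D : Fin (s - 1 - t + t) → Finset (Fin n) := Fin.append A C with hD
  have hDd : ∀ i j, i ≠ j → Disjoint (D i) (D j) :=
    append_pairwise_disjoint A C hd hCd hAC
  set E : Fin (s - 1 - t + t + 1) → Finset (Fin n) := Fin.append D (fun _ : Fin 1 => S)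
    with hE
  have hDS : ∀ i, Disjoint (D i) S := by
    intro i
    refine Fin.addCases (motive := fun i => Disjoint (D i) S) ?_ ?_ i
    · intro il; simp only [hD, Fin.append_left]; exact (hSA il).symm
    · intro ir; simp only [hD, Fin.append_right]; exact (hSC ir).symm
  have hEd : ∀ i j, i ≠ j → Disjoint (E i) (E j) := by
    refine append_pairwise_disjoint D _ hDd ?_ ?_
    · intro i j hij; exact absurd (Subsingleton.elim i j) hij
    · intro i j; exact hDS i
  have hEF : ∀ i, E i ∈ F := by
    intro i
    refine Fin.addCases (motive := fun i => E i ∈ F) ?_ ?_ i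
    · intro il
      simp only [hE, Fin.append_left]
      refine Fin.addCases (motive := fun il => D il ∈ F) ?_ ?_ il
      · intro j; simp only [hD, Fin.append_left]; exact hAF j
      · intro j; simp only [hD, Fin.append_right]; exact hCF j
    · intro ir
      simp only [hE, Fin.append_right]
      exact hSF
  have hlen : s = s - 1 - t + t + 1 := by omega
  refine hF.1 ⟨fun i => E (Fin.cast hlen i), fun i => hEF _, ?_⟩
  intro i j hij
  exact hEd _ _ (fun h => hij (Fin.cast_injective hlen h))
end
end

section
/- Let F ⊆ 2^[n] contain no s pairwise disjoint sets. Fix pairwise disjoint A_1,...,A_{s−1} ∈ F and pairwise disjoint B_1,...,B_{s−1} ∈ F, and integers 0 ≤ k_1 < k_2 ≤ s−1. Define f(x) = ∏_{j ∈ A_1∪...∪A_{k_1}} x_j · ∏_{j ∈ A_{k_1+1}∪...∪A_{s−1}} (1−x_j) and g(x) = ∏_{j ∈ B_1∪...∪B_{k_2}} x_j · ∏_{j ∈ B_{k_2+1}∪...∪B_{s−1}} (1−x_j). Then f(x)·g(x) = 0 for every x ∈ {0,1}^n. -/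
open Finset
open scoped Classical

noncomputable section

section ZeroOne

variable {R ι : Type*} [CommRing R] {x : ι → R} {S : Finset ι}

theorem eq_one_of_prod_ne_zero (hx : ∀ i, x i = 0 ∨ x i = 1) (h : ∏ j ∈ S, x j ≠ 0) :
    ∀ j ∈ S, x j = 1 := fun j hj =>
  (hx j).resolve_left fun h0 => h (Finset.prod_eq_zero hj h0)

theorem eq_zero_of_prod_one_sub_ne_zero (hx : ∀ i, x i = 0 ∨ x i = 1)
    (h : ∏ j ∈ S, (1 - x j) ≠ 0) : ∀ j ∈ S, x j = 0 := fun j hj =>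
  (hx j).resolve_right fun h1 => h (Finset.prod_eq_zero hj (by rw [h1, sub_self]))

end ZeroOne

section Matching

variable {n : ℕ} {F : Finset (Finset (Fin n))}

theorem HasMatching.mono {s m : ℕ} (h : HasMatching m F) (hsm : s ≤ m) : HasMatching s F := by
  obtain ⟨A, hAF, hA⟩ := h
  exact ⟨A ∘ Fin.castLE hsm, fun i => hAF _,
    fun i j hij => hA _ _ ((Fin.castLE_injective hsm).ne hij)⟩

theorem hasMatching_add {a b : ℕ} (A : Fin a → Finset (Fin n)) (B : Fin b → Finset (Fin n))
    (hAF : ∀ i, A i ∈ F) (hBF : ∀ i, B i ∈ F)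
    (hA : ∀ i j, i ≠ j → Disjoint (A i) (A j)) (hB : ∀ i j, i ≠ j → Disjoint (B i) (B j))
    (hAB : ∀ i j, Disjoint (A i) (B j)) : HasMatching (a + b) F := by
  refine ⟨Fin.append A B, Fin.addCases (by simpa) (by simpa), ?_⟩
  intro i j hij
  induction i using Fin.addCases <;> induction j using Fin.addCases <;>
    simp only [Fin.append_left, Fin.append_right] at hij ⊢
  · exact hA _ _ (Fin.castAdd_injective _ _ |>.ne_iff.mp hij)
  · exact hAB _ _
  · exact (hAB _ _).symm
  · exact hB _ _ (Fin.natAdd_injective _ _ |>.ne_iff.mp hij)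

end Matching

theorem product_eq_zero_general {n s : ℕ}
    (F : Finset (Finset (Fin n))) (hF : ¬ HasMatching s F)
    (k₁ k₂ : ℕ) (hk : k₁ < k₂) (hk₂ : k₂ ≤ s - 1)
    (A B : Fin (s - 1) → Finset (Fin n))
    (hAF : ∀ i, A i ∈ F) (hBF : ∀ i, B i ∈ F)
    (hA : ∀ i j, i ≠ j → Disjoint (A i) (A j))
    (hB : ∀ i j, i ≠ j → Disjoint (B i) (B j))
    (x : Fin n → ℝ) (hx : ∀ i, x i = 0 ∨ x i = 1) :
    ((∏ j ∈ (Finset.univ.filter fun i : Fin (s - 1) => (i : ℕ) < k₁).sup A, x j) *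
        ∏ j ∈ (Finset.univ.filter fun i : Fin (s - 1) => k₁ ≤ (i : ℕ)).sup A, (1 - x j)) *
      ((∏ j ∈ (Finset.univ.filter fun i : Fin (s - 1) => (i : ℕ) < k₂).sup B, x j) *
        ∏ j ∈ (Finset.univ.filter fun i : Fin (s - 1) => k₂ ≤ (i : ℕ)).sup B, (1 - x j))
      = 0 := by
  by_contra h
  have hA0 := eq_zero_of_prod_one_sub_ne_zero hx (right_ne_zero_of_mul (left_ne_zero_of_mul h))
  have hB1 := eq_one_of_prod_ne_zero hx (left_ne_zero_of_mul (right_ne_zero_of_mul h))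
  -- `x` vanishes on the last `s - 1 - k₁` sets `A i` and is `1` on the first `k₂` sets `B i`,
  -- so together they form a matching of size `s - 1 - k₁ + k₂ ≥ s`.
  let lateA : Fin (s - 1 - k₁) → Finset (Fin n) := fun i => A ⟨k₁ + i, by omega⟩
  let earlyB : Fin k₂ → Finset (Fin n) := fun i => B ⟨i, by omega⟩
  have hlateA_earlyB : ∀ i j, Disjoint (lateA i) (earlyB j) := by
    refine fun i j => Finset.disjoint_left.mpr fun t htA htB => ?_
    have h0 := hA0 t (Finset.mem_sup.mpr ⟨_, by simp, htA⟩)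
    have h1 := hB1 t (Finset.mem_sup.mpr ⟨⟨j, by omega⟩, by simp, htB⟩)
    exact zero_ne_one (h0.symm.trans h1)
  refine hF ((hasMatching_add lateA earlyB (fun i => hAF _) (fun i => hBF _) ?_ ?_
    hlateA_earlyB).mono (by omega))
  · exact fun i j hij => hA _ _ (by simpa [Fin.ext_iff] using hij)
  · exact fun i j hij => hB _ _ (by simpa [Fin.ext_iff] using hij)

/-- the two polynomials built from two matchings of `F` with
parameters `k₁ < k₂` multiply to zero on `{0,1}^n`. -/
theorem product_eq_zero {n s : ℕ} (hn : 1 ≤ n) (hs : 2 ≤ s)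
    (F : Finset (Finset (Fin n))) (hF : ¬ HasMatching s F)
    (k₁ k₂ : ℕ) (hk : k₁ < k₂) (hk₂ : k₂ ≤ s - 1)
    (A B : Fin (s - 1) → Finset (Fin n))
    (hAF : ∀ i, A i ∈ F) (hBF : ∀ i, B i ∈ F)
    (hA : ∀ i j, i ≠ j → Disjoint (A i) (A j))
    (hB : ∀ i j, i ≠ j → Disjoint (B i) (B j))
    (x : Fin n → ℝ) (hx : ∀ i, x i = 0 ∨ x i = 1) :
    ((∏ j ∈ (Finset.univ.filter fun i : Fin (s - 1) => (i : ℕ) < k₁).sup A, x j) *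
        ∏ j ∈ (Finset.univ.filter fun i : Fin (s - 1) => k₁ ≤ (i : ℕ)).sup A, (1 - x j)) *
      ((∏ j ∈ (Finset.univ.filter fun i : Fin (s - 1) => (i : ℕ) < k₂).sup B, x j) *
        ∏ j ∈ (Finset.univ.filter fun i : Fin (s - 1) => k₂ ≤ (i : ℕ)).sup B, (1 - x j))
      = 0 :=
  product_eq_zero_general F hF k₁ k₂ hk hk₂ A B hAF hBF hA hB x hx
end
end

section
/- Let F ⊆ 2^[n] be s-saturated and G := { [n]\A : A ∉ F }. For each G ∈ G fix a decomposition G = X_G ⊔ Y_G into two disjoint sets, each a (possibly empty) disjoint union of members of F, and define w_G(x) := ∏_{j∈X_G} x_j · ∏_{j∈Y_G} (1−x_j). Then for distinct G_1, G_2 ∈ G we have w_{G_1} ≠ w_{G_2} as functions on {0,1}^n. -/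
open Finset
open scoped Classical

noncomputable section

/-!
`w_G` is the indicator function of the subcube `{x | x = 1 on X_G, x = 0 on Y_G}`. Since `X_G` and
`Y_G` are disjoint this subcube is nonempty, and a nonempty subcube determines the coordinates it
fixes to `1` and to `0`. Hence `w_G` determines `X_G`, `Y_G`, and so `G = X_G ∪ Y_G`.
-/

namespace Subcube

variable {ι : Type*} (X Y : Finset ι)

def carrier : Set (ι → Bool) :=
  {x | (∀ j ∈ X, x j = true) ∧ ∀ j ∈ Y, x j = false}

def weight (R : Type*) [CommMonoidWithZero R] (x : ι → Bool) : R :=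
  (∏ j ∈ X, if x j then (1 : R) else 0) * ∏ j ∈ Y, if x j then (0 : R) else 1

variable {X Y}

theorem weight_eq_indicator (R : Type*) [CommMonoidWithZero R] :
    weight X Y R = (carrier X Y).indicator 1 := by
  funext x
  by_cases hx : x ∈ carrier X Y
  · rw [Set.indicator_of_mem hx, weight, prod_eq_one, prod_eq_one, one_mul, Pi.one_apply]
    · intro j hj
      simp [hx.2 j hj]
    · intro j hj
      simp [hx.1 j hj]
  · rw [Set.indicator_of_notMem hx, weight]
    simp only [carrier, Set.mem_ofPred_eq, not_and_or, not_forall, Bool.not_eq_true,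
      Bool.not_eq_false] at hx
    rcases hx with ⟨j, hj, hxj⟩ | ⟨j, hj, hxj⟩
    · rw [prod_eq_zero hj (by simp [hxj]), zero_mul]
    · rw [prod_eq_zero hj (by simp [hxj]), mul_zero]

theorem forall_carrier_true_iff (h : Disjoint X Y) {j : ι} :
    (∀ x ∈ carrier X Y, x j = true) ↔ j ∈ X := by
  refine ⟨fun hj => ?_, fun hj x hx => hx.1 j hj⟩
  have hmem : (fun i => decide (i ∈ X)) ∈ carrier X Y :=
    ⟨fun i hi => by simp [hi], fun i hi => by simp [disjoint_right.mp h hi]⟩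
  simpa using hj _ hmem

theorem forall_carrier_false_iff (h : Disjoint X Y) {j : ι} :
    (∀ x ∈ carrier X Y, x j = false) ↔ j ∈ Y := by
  refine ⟨fun hj => ?_, fun hj x hx => hx.2 j hj⟩
  have hmem : (fun i => decide (i ∉ Y)) ∈ carrier X Y :=
    ⟨fun i hi => by simp [disjoint_left.mp h hi], fun i hi => by simp [hi]⟩
  simpa using hj _ hmem

theorem carrier_injective {X₁ Y₁ X₂ Y₂ : Finset ι} (h₁ : Disjoint X₁ Y₁) (h₂ : Disjoint X₂ Y₂)
    (h : carrier X₁ Y₁ = carrier X₂ Y₂) : X₁ = X₂ ∧ Y₁ = Y₂ := by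
  constructor <;> ext j
  · rw [← forall_carrier_true_iff h₁, ← forall_carrier_true_iff h₂, h]
  · rw [← forall_carrier_false_iff h₁, ← forall_carrier_false_iff h₂, h]

theorem weight_injective {R : Type*} [CommMonoidWithZero R] [Nontrivial R]
    {X₁ Y₁ X₂ Y₂ : Finset ι} (h₁ : Disjoint X₁ Y₁) (h₂ : Disjoint X₂ Y₂)
    (h : weight X₁ Y₁ R = weight X₂ Y₂ R) : X₁ = X₂ ∧ Y₁ = Y₂ := by
  rw [weight_eq_indicator, weight_eq_indicator] at h
  exact carrier_injective h₁ h₂ (Set.indicator_one_inj R h)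

end Subcube

theorem wG_injective_general {n : ℕ}
    (F : Finset (Finset (Fin n)))
    (X Y : Finset (Fin n) → Finset (Fin n))
    (hXY : ∀ G ∈ Finset.univ.filter fun G : Finset (Fin n) => Gᶜ ∉ F,
      Disjoint (X G) (Y G) ∧ X G ∪ Y G = G ∧
        IsDisjUnionOf F (X G) ∧ IsDisjUnionOf F (Y G)) :
    ∀ G₁ ∈ Finset.univ.filter fun G : Finset (Fin n) => Gᶜ ∉ F,
      ∀ G₂ ∈ Finset.univ.filter fun G : Finset (Fin n) => Gᶜ ∉ F,
        G₁ ≠ G₂ →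
          (fun x : Fin n → Bool =>
              (∏ j ∈ X G₁, (if x j then (1 : ℝ) else 0)) *
                ∏ j ∈ Y G₁, (if x j then (0 : ℝ) else 1)) ≠
            (fun x : Fin n → Bool =>
              (∏ j ∈ X G₂, (if x j then (1 : ℝ) else 0)) *
                ∏ j ∈ Y G₂, (if x j then (0 : ℝ) else 1)) := by
  intro G₁ hG₁ G₂ hG₂ hne hw
  obtain ⟨hd₁, hu₁, -, -⟩ := hXY G₁ hG₁
  obtain ⟨hd₂, hu₂, -, -⟩ := hXY G₂ hG₂
  obtain ⟨hX, hY⟩ := Subcube.weight_injective (R := ℝ) hd₁ hd₂ hw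
  exact hne (by rw [← hu₁, ← hu₂, hX, hY])

/-- for an `s`-saturated `F` with `𝒢 := {[n] \ A : A ∉ F}` and
chosen decompositions `G = X_G ⊔ Y_G` into disjoint unions of members of `F`,
distinct `G₁, G₂ ∈ 𝒢` give distinct functions `w_{G₁} ≠ w_{G₂}`. -/
theorem wG_injective {n s : ℕ} (hn : 1 ≤ n) (hs : 2 ≤ s)
    (F : Finset (Finset (Fin n))) (hF : Saturated s F)
    (X Y : Finset (Fin n) → Finset (Fin n))
    (hXY : ∀ G ∈ Finset.univ.filter fun G : Finset (Fin n) => Gᶜ ∉ F,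
      Disjoint (X G) (Y G) ∧ X G ∪ Y G = G ∧
        IsDisjUnionOf F (X G) ∧ IsDisjUnionOf F (Y G)) :
    ∀ G₁ ∈ Finset.univ.filter fun G : Finset (Fin n) => Gᶜ ∉ F,
      ∀ G₂ ∈ Finset.univ.filter fun G : Finset (Fin n) => Gᶜ ∉ F,
        G₁ ≠ G₂ →
          (fun x : Fin n → Bool =>
              (∏ j ∈ X G₁, (if x j then (1 : ℝ) else 0)) *
                ∏ j ∈ Y G₁, (if x j then (0 : ℝ) else 1)) ≠
            (fun x : Fin n → Bool =>
              (∏ j ∈ X G₂, (if x j then (1 : ℝ) else 0)) *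
                ∏ j ∈ Y G₂, (if x j then (0 : ℝ) else 1)) :=
  wG_injective_general F X Y hXY
end
end

section
/- Fix integers s ≥ 2 and r ≥ 1, let m = 2r+1, and suppose n ≥ (s−1)m. Partition [n] into blocks I_1, ..., I_{s−1} of size m each and a remainder J. Define F := { A ⊆ [n] : ∃ i ∈ [s−1], |A ∩ I_i| ≥ r+1 }. Then F is s-saturated: it contains no s pairwise disjoint sets, and for every B ∉ F there exist s−1 pairwise disjoint members of F disjoint from B. -/
open Finset
open scoped Classical

noncomputable section

/-- the block construction is `s`-saturated. -/
theorem block_family_saturated {n s r : ℕ} (hs : 2 ≤ s) (hr : 1 ≤ r)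
    (hn : (s - 1) * (2 * r + 1) ≤ n)
    (I : Fin (s - 1) → Finset (Fin n))
    (hI : ∀ i j, i ≠ j → Disjoint (I i) (I j))
    (hcard : ∀ i, (I i).card = 2 * r + 1) :
    (¬ HasMatching s (Finset.univ.filter fun A : Finset (Fin n) =>
        ∃ i, r + 1 ≤ (A ∩ I i).card)) ∧
      ∀ B : Finset (Fin n),
        B ∉ (Finset.univ.filter fun A : Finset (Fin n) =>
          ∃ i, r + 1 ≤ (A ∩ I i).card) →
        ∃ C : Fin (s - 1) → Finset (Fin n),
          (∀ i, C i ∈ Finset.univ.filter fun A : Finset (Fin n) =>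
            ∃ i', r + 1 ≤ (A ∩ I i').card) ∧
          (∀ i j, i ≠ j → Disjoint (C i) (C j)) ∧
          ∀ i, Disjoint (C i) B := by
  constructor
  · rintro ⟨A, hA, hdisj⟩
    have hf : ∀ j : Fin s, ∃ i, r + 1 ≤ (A j ∩ I i).card := by
      intro j
      have := hA j
      simpa using this
    choose f hf using hf
    have hlt : Fintype.card (Fin (s - 1)) < Fintype.card (Fin s) := by
      simp only [Fintype.card_fin]
      omega
    obtain ⟨j, k, hjk, hfe⟩ := Fintype.exists_ne_map_eq_of_card_lt f hlt
    have hd : Disjoint (A j ∩ I (f j)) (A k ∩ I (f j)) :=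
      (hdisj j k hjk).mono inter_subset_left inter_subset_left
    have hsub : (A j ∩ I (f j)) ∪ (A k ∩ I (f j)) ⊆ I (f j) := by
      apply union_subset inter_subset_right inter_subset_right
    have hcardle := card_le_card hsub
    rw [card_union_of_disjoint hd, hcard (f j)] at hcardle
    have h1 := hf j
    have h2 := hf k
    rw [← hfe] at h2
    omega
  · intro B hB
    simp only [mem_filter, mem_univ, true_and, not_exists, not_le] at hB
    refine ⟨fun i => I i \ B, ?_, ?_, ?_⟩
    · intro i
      simp only [mem_filter, mem_univ, true_and]
      refine ⟨i, ?_⟩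
      have h1 : (I i \ B) ∩ I i = I i \ B := by
        ext x; simp [and_comm]
      rw [h1]
      have h2 : (I i ∩ B).card ≤ r := by
        have := hB i
        rw [inter_comm] at this; omega
      have h4 := card_sdiff_add_card_inter (I i) B
      have h5 := hcard i
      omega
    · intro i j hij
      exact (hI i j hij).mono sdiff_le sdiff_le
    · intro i
      exact sdiff_disjoint
end
end

section
/- With F as in the block construction (F = { A ⊆ [n] : ∃ i, |A ∩ I_i| ≥ r+1 } for a partition of [n] into s−1 blocks I_i of size 2r+1 plus a remainder J), one has F^{□(s−1)} = { A ⊆ [n] : |A ∩ I_i| ≥ r+1 for every i ∈ [s−1] }, equivalently { [n]\A : A ∉ F } equals this family. -/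
open Finset
open scoped Classical

noncomputable section

lemma card_inter_compl_split {n : ℕ} (A T : Finset (Fin n)) :
    (A ∩ T).card + (Aᶜ ∩ T).card = T.card := by
  classical
  rw [← Finset.card_union_of_disjoint
    ((disjoint_compl_right).mono inter_subset_left inter_subset_left)]
  congr 1
  rw [← union_inter_distrib_right, union_compl, univ_inter]

/-- for the block construction,
`F^{□(s-1)} = {A : |A ∩ I_i| ≥ r+1 for all i}`, equivalently this family is
the set of complements of non-members of `F`. -/
theorem block_family_boxPow {n s r : ℕ} (hs : 2 ≤ s) (hr : 1 ≤ r)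
    (hn : (s - 1) * (2 * r + 1) ≤ n)
    (I : Fin (s - 1) → Finset (Fin n))
    (hI : ∀ i j, i ≠ j → Disjoint (I i) (I j))
    (hcard : ∀ i, (I i).card = 2 * r + 1) :
    (boxPow Finset.univ
        (Finset.univ.filter fun A : Finset (Fin n) => ∃ i, r + 1 ≤ (A ∩ I i).card)
        (s - 1)
      = Finset.univ.filter fun A : Finset (Fin n) => ∀ i, r + 1 ≤ (A ∩ I i).card) ∧
    ((Finset.univ.filter fun A : Finset (Fin n) =>
        A ∉ Finset.univ.filter fun A' : Finset (Fin n) =>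
          ∃ i, r + 1 ≤ (A' ∩ I i).card).image (fun A => Aᶜ)
      = Finset.univ.filter fun A : Finset (Fin n) => ∀ i, r + 1 ≤ (A ∩ I i).card) := by
  have h1 : 1 ≤ s - 1 := by omega
  clear hs hr hn
  revert I
  generalize s - 1 = t at h1 ⊢
  obtain ⟨m, rfl⟩ : ∃ m, t = m + 1 := ⟨t - 1, by omega⟩
  intro I hI hcard
  constructor
  · ext S
    rw [boxPow]
    simp only [mem_filter, mem_powerset, subset_univ, true_and, mem_univ]
    constructor
    · rintro ⟨A, hAF, hdisj, rfl⟩ i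
      choose f hf using fun k => hAF k
      have hinj : Function.Injective f := by
        intro k k' hkk'
        by_contra hne
        have hd : Disjoint (A k ∩ I (f k)) (A k' ∩ I (f k)) :=
          (hdisj k k' hne).mono inter_subset_left inter_subset_left
        have h1 := hf k
        have h2 := hf k'
        rw [← hkk'] at h2
        have hsub : (A k ∩ I (f k)) ∪ (A k' ∩ I (f k)) ⊆ I (f k) :=
          union_subset inter_subset_right inter_subset_right
        have := card_le_card hsub
        rw [card_union_of_disjoint hd, hcard] at this
        omega
      obtain ⟨k, rfl⟩ := Finite.injective_iff_surjective.mp hinj i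
      calc r + 1 ≤ (A k ∩ I (f k)).card := hf k
        _ ≤ ((Finset.univ.sup A) ∩ I (f k)).card :=
          card_le_card (inter_subset_inter (le_sup (mem_univ k)) subset_rfl)
    · intro hS
      set R : Finset (Fin n) := S \ Finset.univ.sup I with hR
      set B : Fin (m + 1) → Finset (Fin n) :=
        fun k => if k = 0 then (S ∩ I 0) ∪ R else S ∩ I k with hB
      have hBsub : ∀ k, B k ⊆ S := by
        intro k
        by_cases hk : k = 0
        · simp only [hB, hk, if_pos]
          exact union_subset inter_subset_left (sdiff_subset)
        · simp only [hB, if_neg hk]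
          exact inter_subset_left
      have hBI : ∀ k, S ∩ I k ⊆ B k := by
        intro k
        by_cases hk : k = 0
        · subst hk; simp only [hB, if_pos]; exact subset_union_left
        · simp only [hB, if_neg hk]; exact subset_rfl
      refine ⟨B, ?_, ?_, ?_⟩
      · intro k
        refine ⟨k, ?_⟩
        calc r + 1 ≤ (S ∩ I k).card := hS k
          _ ≤ (B k ∩ I k).card :=
            card_le_card (subset_inter (hBI k) inter_subset_right)
      · intro k k' hne
        have hRI : ∀ j, Disjoint R (I j) := by
          intro j
          rw [Finset.disjoint_left]
          intro x hx hxI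
          exact (mem_sdiff.mp hx).2 (mem_sup.mpr ⟨j, mem_univ j, hxI⟩)
        have key : ∀ j j' : Fin (m+1), j ≠ j' → j' ≠ 0 → Disjoint (B j) (B j') := by
          intro j j' hjj' hj'
          simp only [hB, if_neg hj']
          by_cases hj : j = 0
          · subst hj
            simp only [if_pos]
            refine disjoint_union_left.mpr ⟨?_, (hRI j').mono_right inter_subset_right⟩
            exact (hI 0 j' (Ne.symm hj')).mono inter_subset_right inter_subset_right
          · simp only [if_neg hj]
            exact (hI j j' hjj').mono inter_subset_right inter_subset_right
        by_cases hk' : k' = 0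
        · subst hk'
          exact (key 0 k (Ne.symm hne) hne).symm
        · exact key k k' hne hk'
      · apply Finset.Subset.antisymm
        · intro x hx
          rw [mem_sup]
          by_cases hxI : x ∈ Finset.univ.sup I
          · obtain ⟨j, _, hj⟩ := mem_sup.mp hxI
            exact ⟨j, mem_univ j, hBI j (mem_inter.mpr ⟨hx, hj⟩)⟩
          · exact ⟨0, mem_univ 0, by
              simp only [hB, if_pos]
              exact mem_union_right _ (mem_sdiff.mpr ⟨hx, hxI⟩)⟩
        · intro x hx
          obtain ⟨k, _, hk⟩ := mem_sup.mp hx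
          exact hBsub k hk
  · ext C
    simp only [mem_image, mem_filter, mem_univ, true_and, not_exists, not_le]
    constructor
    · rintro ⟨A, hA, rfl⟩ i
      have key := card_inter_compl_split A (I i)
      have h2 := hA i
      rw [hcard] at key
      omega
    · intro hC
      refine ⟨Cᶜ, fun i => ?_, compl_compl C⟩
      have key := card_inter_compl_split Cᶜ (I i)
      rw [compl_compl, hcard] at key
      have := hC i
      omega
end
end
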